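/- For every odd natural number k ≥ 3, the polynomial X^2 (X+1)^2 divides, in ℚ[X], the Faulhaber polynomial Q_k(X) = (1/(k+1)) · ∑_{j=0}^{k} C(k+1, j) · B'_j · X^{k+1-j}, whose value at every natural number n equals 1^k + 2^k + ... + n^k. -/

import Mathlib

/-!
Summing `i ^ k` shows that `Q(X + 1) = Q(X) + (X + 1) ^ k` holds at every natural number, hence
as polynomials. Together with `Q(0) = 0` this gives `Q(-1) = 0`, and differentiating it gives
`Q'(-1) = Q'(0)` once `k ≥ 2`. Finally `Q'(0)` is the coefficient of `X`, namely `B'_k`, which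
vanishes for odd `k > 1`; so `0` and `-1` are double roots of `Q`.
-/

open Polynomial

namespace Polynomial

theorem X_sub_C_sq_dvd_of_isRoot_derivative {R : Type*} [CommRing R] {p : R[X]} {a : R}
    (hp : p.IsRoot a) (hp' : p.derivative.IsRoot a) : (X - C a) ^ 2 ∣ p := by
  rcases eq_or_ne p 0 with rfl | hp₀
  · exact dvd_zero _
  · exact (le_rootMultiplicity_iff hp₀).1 <| (one_lt_rootMultiplicity_iff_isRoot hp₀).2 ⟨hp, hp'⟩

theorem eq_of_forall_eval_natCast_eq {R : Type*} [CommRing R] [IsDomain R] [CharZero R]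
    {p q : R[X]} (h : ∀ n : ℕ, p.eval (n : R) = q.eval (n : R)) : p = q :=
  eq_of_infinite_eval_eq p q <| (Set.infinite_range_of_injective Nat.cast_injective).mono <| by
    rintro _ ⟨n, rfl⟩
    exact h n

end Polynomial

noncomputable def faulhaber (k : ℕ) : ℚ[X] :=
  C (1 / (k + 1 : ℚ)) *
    ∑ j ∈ Finset.range (k + 1), C ((Nat.choose (k + 1) j : ℚ) * bernoulli' j) * X ^ (k + 1 - j)

section Faulhaber

variable (k : ℕ)

theorem faulhaber_eval_natCast (n : ℕ) :
    (faulhaber k).eval (n : ℚ) = ∑ i ∈ Finset.Icc 1 n, (i : ℚ) ^ k := by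
  rw [← Finset.Ico_add_one_right_eq_Icc, sum_Ico_pow, faulhaber, eval_mul, eval_C,
    eval_finsetSum, Finset.mul_sum]
  refine Finset.sum_congr rfl fun j _ => ?_
  simp only [eval_mul, eval_C, eval_pow, eval_X]
  ring

theorem faulhaber_comp_X_add_one : (faulhaber k).comp (X + 1) = faulhaber k + (X + 1) ^ k := by
  refine eq_of_forall_eval_natCast_eq fun n => ?_
  simp only [eval_comp, eval_add, eval_pow, eval_X, eval_one]
  rw [← Nat.cast_add_one, faulhaber_eval_natCast, faulhaber_eval_natCast,
    Finset.sum_Icc_succ_top (by omega)]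

theorem faulhaber_eval_zero : (faulhaber k).eval 0 = 0 := by
  simpa using faulhaber_eval_natCast k 0

theorem faulhaber_eval_neg_one (hk : k ≠ 0) : (faulhaber k).eval (-1) = 0 := by
  have := congrArg (eval (-1)) (faulhaber_comp_X_add_one k)
  simpa [faulhaber_eval_zero, zero_pow hk] using this.symm

theorem coeff_faulhaber_one : (faulhaber k).coeff 1 = bernoulli' k := by
  rw [faulhaber, coeff_C_mul, finsetSum_coeff, Finset.sum_eq_single k]
  · simp only [one_div, Nat.choose_succ_self_right, Nat.cast_add_one, coeff_C_mul,
      Nat.add_sub_cancel_left, coeff_X_pow_self]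
    field_simp
  · intro j hj hjk
    rw [coeff_C_mul, coeff_X_pow, if_neg (by grind), mul_zero]
  · simp

theorem derivative_faulhaber_eval_zero : (faulhaber k).derivative.eval 0 = bernoulli' k := by
  rw [← coeff_zero_eq_eval_zero, coeff_derivative, coeff_faulhaber_one]
  simp

theorem derivative_faulhaber_eval_neg_one (hk : 2 ≤ k) :
    (faulhaber k).derivative.eval (-1) = bernoulli' k := by
  have := congrArg (fun p => p.derivative.eval (-1)) (faulhaber_comp_X_add_one k)
  simp only [derivative_comp, derivative_add, derivative_pow, derivative_X, derivative_one,
    add_zero, mul_one, one_mul] at this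
  simpa [zero_pow (by omega : k - 1 ≠ 0), derivative_faulhaber_eval_zero] using this.symm

theorem X_sq_dvd_faulhaber (hB : bernoulli' k = 0) : X ^ 2 ∣ faulhaber k := by
  simpa using X_sub_C_sq_dvd_of_isRoot_derivative (a := 0) (faulhaber_eval_zero k)
    ((derivative_faulhaber_eval_zero k).trans hB)

theorem X_add_one_sq_dvd_faulhaber (hk : 2 ≤ k) (hB : bernoulli' k = 0) :
    (X + 1) ^ 2 ∣ faulhaber k := by
  simpa using X_sub_C_sq_dvd_of_isRoot_derivative (a := -1) (faulhaber_eval_neg_one k (by omega))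
    ((derivative_faulhaber_eval_neg_one k hk).trans hB)

end Faulhaber

/-- For every odd `k ≥ 3`, the polynomial `X^2 (X+1)^2` divides in `ℚ[X]` the Faulhaber
polynomial `Q_k(X) = (1/(k+1)) * ∑_{j=0}^{k} C(k+1,j) * B'_j * X^(k+1-j)`, whose value at
every natural number `n` equals `1^k + 2^k + ... + n^k`. -/
theorem sq_X_mul_sq_X_add_one_dvd_faulhaber (k : ℕ) (hk : 3 ≤ k) (hodd : Odd k)
    (Q : ℚ[X])
    (hQ : Q = Polynomial.C (1 / (k + 1 : ℚ)) *
      ∑ j ∈ Finset.range (k + 1),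
        Polynomial.C ((Nat.choose (k + 1) j : ℚ) * bernoulli' j) * X ^ (k + 1 - j)) :
    (X ^ 2 * (X + 1) ^ 2 ∣ Q) ∧
      ∀ n : ℕ, Q.eval (n : ℚ) = ∑ i ∈ Finset.Icc 1 n, (i : ℚ) ^ k := by
  obtain rfl : Q = faulhaber k := hQ
  have hB : bernoulli' k = 0 := bernoulli'_eq_zero_of_odd hodd (by omega)
  have hcop : IsCoprime (X : ℚ[X]) (X + 1) := ⟨-1, 1, by ring⟩
  exact ⟨hcop.pow.mul_dvd (X_sq_dvd_faulhaber k hB) (X_add_one_sq_dvd_faulhaber k (by omega) hB),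
    faulhaber_eval_natCast k⟩
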